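/- arXiv:2604.05133 — 5 statements merged into one kernel-verified Lean document; each statement's English description precedes it below -/
import Mathlib

section
/- Let {Π_ρ}_{ρ∈R} be a family of mutually orthogonal projectors on A summing to at most the identity, and {M_ρ}_{ρ∈R} orthogonal projectors on Y. If ψ ∈ H ⊗ A where H ⊆ Y is a γ-anti-concentrated subspace, then ‖Π ψ‖ ≤ γ‖ψ‖, where Π = Σ_{ρ∈R} M_ρ ⊗ Π_ρ. -/
/-!
Write `T_ρ` for `P_ρ ⊗ 1`. The `T_ρ` are orthogonal projections with `T_ρ T_σ = 0` for
`ρ ≠ σ`, and `M_ρ ⊗ 1` commutes with `T_ρ`, so the vectors `Πψ = ∑_ρ (M_ρ ⊗ 1) T_ρ ψ` are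
pairwise orthogonal and Pythagoras gives `‖Πψ‖² = ∑_ρ ‖(M_ρ ⊗ 1) T_ρ ψ‖²`. Each `T_ρ ψ` still
has components in `H`, so anti-concentration bounds the summand by `γ² ‖T_ρ ψ‖²`, and
`∑_ρ ‖T_ρ ψ‖² = ‖(∑_ρ T_ρ) ψ‖² ≤ ‖ψ‖²` because `∑_ρ T_ρ` is again an orthogonal projection.
-/

open scoped InnerProductSpace

section OrthogonalProjections

variable {𝕜 E ι : Type*} [RCLike 𝕜] [NormedAddCommGroup E] [InnerProductSpace 𝕜 E]

theorem norm_sum_sq_eq_sum_norm_sq_of_pairwise_inner_eq_zero (s : Finset ι) {v : ι → E}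
    (hv : Pairwise fun i j => ⟪v i, v j⟫_𝕜 = 0) :
    ‖∑ i ∈ s, v i‖ ^ 2 = ∑ i ∈ s, ‖v i‖ ^ 2 := by
  classical
  induction s using Finset.induction_on with
  | empty => simp
  | insert i s hi ih =>
    have horth : ⟪v i, ∑ j ∈ s, v j⟫_𝕜 = 0 := by
      rw [inner_sum]
      exact Finset.sum_eq_zero fun j hj => hv (ne_of_mem_of_not_mem hj hi).symm
    rw [Finset.sum_insert hi, Finset.sum_insert hi, ← ih, sq, sq, sq,
      norm_add_sq_eq_norm_sq_add_norm_sq_of_inner_eq_zero _ _ horth]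

theorem LinearMap.IsSymmetricProjection.norm_apply_le {p : E →ₗ[𝕜] E}
    (hp : p.IsSymmetricProjection) (x : E) : ‖p x‖ ≤ ‖x‖ := by
  obtain ⟨_, hp_eq⟩ := LinearMap.isSymmetricProjection_iff_eq_coe_starProjection_range.mp hp
  rw [hp_eq]
  exact (LinearMap.range p).norm_starProjection_apply_le x

namespace OrthogonalIdempotents

variable {T : ι → Module.End 𝕜 E} (hT : OrthogonalIdempotents T) (hsymm : ∀ i, (T i).IsSymmetric)
include hT hsymm

theorem inner_apply_apply_eq_zero {i j : ι} (hij : i ≠ j) (x y : E) : ⟪T i x, T j y⟫_𝕜 = 0 := by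
  rw [hsymm i, ← Module.End.mul_apply, hT.ortho hij, LinearMap.zero_apply, inner_zero_right]

theorem norm_sum_apply_sq (s : Finset ι) (x : ι → E) :
    ‖∑ i ∈ s, T i (x i)‖ ^ 2 = ∑ i ∈ s, ‖T i (x i)‖ ^ 2 :=
  norm_sum_sq_eq_sum_norm_sq_of_pairwise_inner_eq_zero s fun _ _ hij =>
    hT.inner_apply_apply_eq_zero hsymm hij _ _

theorem sum_norm_apply_sq_le (s : Finset ι) (x : E) : ∑ i ∈ s, ‖T i x‖ ^ 2 ≤ ‖x‖ ^ 2 := by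
  have hproj : (∑ i ∈ s, T i).IsSymmetricProjection :=
    ⟨hT.isIdempotentElem_sum, LinearMap.isSymmetric_sum s fun i _ => hsymm i⟩
  calc ∑ i ∈ s, ‖T i x‖ ^ 2 = ‖(∑ i ∈ s, T i) x‖ ^ 2 := by
        rw [LinearMap.sum_apply, hT.norm_sum_apply_sq hsymm s fun _ => x]
    _ ≤ ‖x‖ ^ 2 := by gcongr; exact hproj.norm_apply_le x

end OrthogonalIdempotents

end OrthogonalProjections

theorem PiLp.norm_sq_le_of_norm_apply_le {ι : Type*} [Fintype ι] {β : ι → Type*}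
    [∀ i, SeminormedAddCommGroup (β i)] {f g : PiLp 2 β} {c : ℝ}
    (h : ∀ i, ‖g i‖ ≤ c * ‖f i‖) : ‖g‖ ^ 2 ≤ c ^ 2 * ‖f‖ ^ 2 := by
  rw [PiLp.norm_sq_eq_of_L2, PiLp.norm_sq_eq_of_L2, Finset.mul_sum]
  gcongr with i
  calc ‖g i‖ ^ 2 ≤ (c * ‖f i‖) ^ 2 := pow_le_pow_left₀ (norm_nonneg _) (h i) 2
    _ = c ^ 2 * ‖f i‖ ^ 2 := mul_pow c _ 2

namespace Matrix

variable {𝕜 Y ι : Type*} [RCLike 𝕜] [NormedAddCommGroup Y] [InnerProductSpace 𝕜 Y]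
  [Fintype ι] [DecidableEq ι]

/-- `A ↦ A ⊗ 1` on `𝕜^ι ⊗ Y`, realised as `ℓ²(ι, Y)`. -/
noncomputable def ampliation : Matrix ι ι 𝕜 →+* Module.End 𝕜 (PiLp 2 fun _ : ι => Y) :=
  (WithLp.linearEquiv 2 𝕜 (ι → Y)).symm.conjRingEquiv.toRingHom.comp <|
    (endVecRingEquivMatrixEnd ι 𝕜 Y).symm.toRingHom.comp (algebraMap 𝕜 (Module.End 𝕜 Y)).mapMatrix

theorem ampliation_apply (A : Matrix ι ι 𝕜) (f : PiLp 2 fun _ : ι => Y) (a : ι) :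
    A.ampliation f a = ∑ a', A a a' • f a' :=
  rfl

theorem ampliation_apply_mem (A : Matrix ι ι 𝕜) {H : Submodule 𝕜 Y} {f : PiLp 2 fun _ : ι => Y}
    (hf : ∀ a, f a ∈ H) (a : ι) : A.ampliation f a ∈ H := by
  rw [ampliation_apply]
  exact H.sum_mem fun a' _ => H.smul_mem _ (hf a')

theorem ampliation_toLp_comp (A : Matrix ι ι 𝕜) (M : Y →ₗ[𝕜] Y) (f : ι → Y) (a : ι) :
    A.ampliation (WithLp.toLp 2 fun a => M (f a)) a = M (A.ampliation (WithLp.toLp 2 f) a) := by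
  simp [ampliation_apply]

theorem IsHermitian.isSymmetric_ampliation {A : Matrix ι ι 𝕜} (hA : A.IsHermitian) :
    (A.ampliation (Y := Y)).IsSymmetric := by
  intro f g
  simp only [PiLp.inner_apply, ampliation_apply, sum_inner, inner_sum, inner_smul_left,
    inner_smul_right]
  rw [Finset.sum_comm]
  refine Finset.sum_congr rfl fun a _ => Finset.sum_congr rfl fun a' _ => ?_
  rw [← hA.apply a a', RCLike.star_def]

end Matrix

theorem stmt_4_general {Y : Type*} [NormedAddCommGroup Y] [InnerProductSpace ℂ Y]
    {ιA R : Type*} [Fintype ιA] [Fintype R] [DecidableEq ιA]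
    (M : R → (Y →ₗ[ℂ] Y))
    (P : R → Matrix ιA ιA ℂ)
    (hPherm : ∀ ρ, (P ρ).IsHermitian) (hPidem : ∀ ρ, P ρ * P ρ = P ρ)
    (hPorth : ∀ ρ ρ', ρ ≠ ρ' → P ρ * P ρ' = 0)
    (γ : ℝ)
    (H : Submodule ℂ Y)
    (hH : ∀ φ ∈ H, ∀ ρ, ‖M ρ φ‖ ≤ γ * ‖φ‖)
    (ψ : ιA → Y) (hψ : ∀ a, ψ a ∈ H) :
    ∑ a, ‖∑ ρ, ∑ a', P ρ a a' • M ρ (ψ a')‖ ^ 2 ≤ γ ^ 2 * ∑ a, ‖ψ a‖ ^ 2 := by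
  have hT : OrthogonalIdempotents (Matrix.ampliation (Y := Y) ∘ P) :=
    .map _ ⟨hPidem, fun _ _ h => hPorth _ _ h⟩
  have hsymm : ∀ ρ, ((P ρ).ampliation (Y := Y)).IsSymmetric :=
    fun ρ => (hPherm ρ).isSymmetric_ampliation
  set Ψ : PiLp 2 fun _ : ιA => Y := WithLp.toLp 2 ψ
  calc ∑ a, ‖∑ ρ, ∑ a', P ρ a a' • M ρ (ψ a')‖ ^ 2
      = ‖∑ ρ, (P ρ).ampliation (WithLp.toLp 2 fun a => M ρ (ψ a))‖ ^ 2 := by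
        simp [PiLp.norm_sq_eq_of_L2, Matrix.ampliation_apply]
    _ = ∑ ρ, ‖(P ρ).ampliation (WithLp.toLp 2 fun a => M ρ (ψ a))‖ ^ 2 :=
        hT.norm_sum_apply_sq hsymm _ _
    _ ≤ ∑ ρ, γ ^ 2 * ‖(P ρ).ampliation Ψ‖ ^ 2 := by
        gcongr with ρ
        refine PiLp.norm_sq_le_of_norm_apply_le fun a => ?_
        rw [Matrix.ampliation_toLp_comp]
        exact hH _ ((P ρ).ampliation_apply_mem hψ a) ρ
    _ = γ ^ 2 * ∑ ρ, ‖(P ρ).ampliation Ψ‖ ^ 2 := Finset.mul_sum .. |>.symm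
    _ ≤ γ ^ 2 * ‖Ψ‖ ^ 2 := by gcongr; exact hT.sum_norm_apply_sq_le hsymm _ _
    _ = γ ^ 2 * ∑ a, ‖ψ a‖ ^ 2 := by rw [PiLp.norm_sq_eq_of_L2]

/-- If `{Π_ρ}` are mutually orthogonal projectors on `A` (coordinatized by `ιA`,
given as matrices) and `{M_ρ}` orthogonal projectors on `Y`, and `ψ ∈ H ⊗ A`
(components `ψ a ∈ H`) with `H ⊆ Y` a `γ`-anti-concentrated subspace, then
`‖Πψ‖ ≤ γ‖ψ‖` where `Π = Σ_ρ M_ρ ⊗ Π_ρ` (stated with squared norms). -/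
theorem stmt_4 {Y : Type*} [NormedAddCommGroup Y] [InnerProductSpace ℂ Y]
    {ιA R : Type*} [Fintype ιA] [Fintype R] [DecidableEq ιA]
    (M : R → (Y →ₗ[ℂ] Y))
    (hMproj : ∀ ρ, (M ρ) ∘ₗ (M ρ) = M ρ) (hMsym : ∀ ρ, (M ρ).IsSymmetric)
    (P : R → Matrix ιA ιA ℂ)
    (hPherm : ∀ ρ, (P ρ).IsHermitian) (hPidem : ∀ ρ, P ρ * P ρ = P ρ)
    (hPorth : ∀ ρ ρ', ρ ≠ ρ' → P ρ * P ρ' = 0)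
    (γ : ℝ) (hγ : 0 ≤ γ)
    (H : Submodule ℂ Y)
    (hH : ∀ φ ∈ H, ∀ ρ, ‖M ρ φ‖ ≤ γ * ‖φ‖)
    (ψ : ιA → Y) (hψ : ∀ a, ψ a ∈ H) :
    ∑ a, ‖∑ ρ, ∑ a', P ρ a a' • M ρ (ψ a')‖ ^ 2 ≤ γ ^ 2 * ∑ a, ‖ψ a‖ ^ 2 :=
  stmt_4_general M P hPherm hPidem hPorth γ H hH ψ hψ
end

section
/- Let Υ_μ⁺ and Υ_μ^{∂i} be the restrictions of Υ_μ to Fourier vectors χ_σ with supp(σ) ∈ L_μ⁺ and supp(σ) ∈ L_μ^{∂i} respectively, where L_μ^{∂i} = {S ∉ L_μ⁺ : S∪{i} ∈ L_μ⁺}. Then for all i ∈ [n] and c ∈ ℤ_q, the commutator identity Υ_μ⁺ O_{i,c} − O_{i,c} Υ_μ⁺ = O_{i,c} Υ_μ^{∂i} − Υ_μ^{∂i} O_{i,c} holds as linear maps from X to Y_μ. -/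
open scoped BigOperators

/-- Commutator identity (Lemma on query gain): with `Υ_μ` the transfer operator
(on Fourier bases), `L⁺` an upwards-closed knowledge family not containing `∅`,
`Υ⁺_μ` and `Υ^{∂i}_μ` the corresponding restrictions of `Υ_μ`, and `O_{i,c}`
acting on the Fourier bases of `X` and `Y_μ` by the index shifts, we have
`Υ⁺_μ O_{i,c} − O_{i,c} Υ⁺_μ = O_{i,c} Υ^{∂i}_μ − Υ^{∂i}_μ O_{i,c}`
as linear maps from `X` to `Y_μ`, for all `i` and `c`. -/
theorem stmt_8 (n m q : ℕ) [NeZero q]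
    (P : Fin n → Fin m) (hP : Function.Surjective P)
    (χX : (Fin n → ZMod q) → EuclideanSpace ℂ (Fin n → ZMod q))
    (hspan : Submodule.span ℂ (Set.range χX) = ⊤)
    (χY : (Fin m → ZMod q) → EuclideanSpace ℂ (Fin m → ZMod q))
    (Υ : EuclideanSpace ℂ (Fin n → ZMod q) →ₗ[ℂ] EuclideanSpace ℂ (Fin m → ZMod q))
    (hΥ : ∀ σ : Fin n → ZMod q,
      Υ (χX σ) = χY (fun B => ∑ j : Fin n, if P j = B then σ j else 0))
    (OX : Fin n → ZMod q →
      (EuclideanSpace ℂ (Fin n → ZMod q) →ₗ[ℂ] EuclideanSpace ℂ (Fin n → ZMod q)))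
    (hOX : ∀ (i : Fin n) (c : ZMod q) (σ : Fin n → ZMod q),
      OX i c (χX σ) = χX (σ + Function.update (0 : Fin n → ZMod q) i c))
    (OY : Fin n → ZMod q →
      (EuclideanSpace ℂ (Fin m → ZMod q) →ₗ[ℂ] EuclideanSpace ℂ (Fin m → ZMod q)))
    (hOY : ∀ (i : Fin n) (c : ZMod q) (τ : Fin m → ZMod q),
      OY i c (χY τ) = χY (τ + Function.update (0 : Fin m → ZMod q) (P i) c))
    (Lp : Finset (Finset (Fin n)))
    (hne : ∅ ∉ Lp)
    (hup : ∀ S ∈ Lp, ∀ T : Finset (Fin n), S ⊆ T → T ∈ Lp)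
    (Υp : EuclideanSpace ℂ (Fin n → ZMod q) →ₗ[ℂ] EuclideanSpace ℂ (Fin m → ZMod q))
    (hΥp : ∀ σ : Fin n → ZMod q,
      Υp (χX σ) = if (Finset.univ.filter (fun j => σ j ≠ 0)) ∈ Lp then Υ (χX σ) else 0)
    (Υd : Fin n →
      (EuclideanSpace ℂ (Fin n → ZMod q) →ₗ[ℂ] EuclideanSpace ℂ (Fin m → ZMod q)))
    (hΥd : ∀ (i : Fin n) (σ : Fin n → ZMod q),
      Υd i (χX σ) =
        if (Finset.univ.filter (fun j => σ j ≠ 0)) ∉ Lp ∧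
            insert i (Finset.univ.filter (fun j => σ j ≠ 0)) ∈ Lp
          then Υ (χX σ) else 0) :
    ∀ (i : Fin n) (c : ZMod q),
      Υp ∘ₗ OX i c - OY i c ∘ₗ Υp = OY i c ∘ₗ Υd i - Υd i ∘ₗ OX i c := by
  intro i c
  apply LinearMap.ext_on hspan
  rintro _ ⟨σ, rfl⟩
  set σ' := σ + Function.update (0 : Fin n → ZMod q) i c with hσ'
  simp only [LinearMap.sub_apply, LinearMap.comp_apply, hOX, hΥp, hΥd, ← hσ']
  have hiff : ∀ j, j ≠ i → σ' j = σ j := by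
    intro j hj
    simp [hσ', Function.update_of_ne hj]
  have hS : insert i (Finset.univ.filter fun j => σ' j ≠ 0)
      = insert i (Finset.univ.filter fun j => σ j ≠ 0) := by
    ext j
    by_cases hj : j = i
    · simp [hj]
    · simp [hj, hiff j hj]
  have hfun : (fun B => ∑ j : Fin n, if P j = B then σ' j else 0)
      = (fun B => ∑ j : Fin n, if P j = B then σ j else 0)
        + Function.update (0 : Fin m → ZMod q) (P i) c := by
    funext B
    have hterm : ∀ j : Fin n, (if P j = B then σ' j else 0)
        = (if P j = B then σ j else 0)
          + (if P j = B then Function.update (0 : Fin n → ZMod q) i c j else 0) := by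
      intro j; by_cases h : P j = B <;> simp [h, hσ']
    simp only [Pi.add_apply, hterm, Finset.sum_add_distrib]
    congr 1
    rw [Finset.sum_eq_single i]
    · rcases eq_or_ne (P i) B with h | h
      · subst h; simp [Function.update]
      · simp [h, Function.update, h.symm]
    · intro j _ hj
      simp [Function.update_of_ne hj]
    · simp
  have hv : Υ (χX σ') = OY i c (Υ (χX σ)) := by
    rw [hΥ, hΥ, hOY, hfun]
  rw [apply_ite (OY i c), apply_ite (OY i c), map_zero, ← hv]
  by_cases hA' : (Finset.univ.filter fun j => σ j ≠ 0) ∈ Lp <;>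
    by_cases hB' : (Finset.univ.filter fun j => σ' j ≠ 0) ∈ Lp
  · simp [hA', hB']
  · have hins : insert i (Finset.univ.filter fun j => σ' j ≠ 0) ∈ Lp := by
      rw [hS]
      exact hup _ hA' _ (Finset.subset_insert _ _)
    simp [hA', hB', hins]
  · have hins : insert i (Finset.univ.filter fun j => σ j ≠ 0) ∈ Lp := by
      rw [← hS]
      exact hup _ hB' _ (Finset.subset_insert _ _)
    simp [hA', hB', hins]
  · by_cases hI : insert i (Finset.univ.filter fun j => σ j ≠ 0) ∈ Lp
    · simp [hA', hB', hI, hS]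
    · simp [hA', hB', hI, hS]
end

section
/- For integers k ≥ 1 and ℓ₁, ℓ₂ ≥ 0 with ℓ₁ + ℓ₂ < k, the alternating sum Σ_{i=0}^{k} (−1)^i · C(k−ℓ₁, i) · C(k−ℓ₂, k−i) / C(k, i) equals 0. -/
/-!
Since `C(k,i) C(k-i,ℓ₁) = C(k,ℓ₁) C(k-ℓ₁,i)`, the ratio `C(k-ℓ₁,i) / C(k,i)` equals
`C(k-i,ℓ₁) / C(k,ℓ₁)`. After substituting `j = k - i`, the sum is therefore, up to sign and the
factor `C(k,ℓ₁)`, the sum `Σ_j (-1)^j C(n,j) C(j,ℓ₁)` with `n = k - ℓ₂ > ℓ₁`. As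
`C(n,m+x) C(m+x,m) = C(n,m) C(n-m,x)`, this is `C(n,ℓ₁)` times an alternating sum of the
coefficients `C(n-ℓ₁,x)`, which vanishes because `n - ℓ₁ > 0`.
-/

open Finset

theorem Nat.choose_mul_choose_sub_comm (k i m : ℕ) :
    k.choose i * (k - i).choose m = k.choose m * (k - m).choose i := by
  by_cases him : i + m ≤ k
  · have hi := Nat.choose_mul (n := k) (Nat.le_add_right i m)
    have hm := Nat.choose_mul (n := k) (Nat.le_add_left m i)
    rw [Nat.add_sub_cancel_left] at hi
    rw [Nat.add_sub_cancel] at hm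
    rw [← hi, ← hm, Nat.choose_symm_add]
  · rcases lt_or_ge k i with hki | hik
    · rw [Nat.choose_eq_zero_of_lt hki, Nat.choose_eq_zero_of_lt (by omega : k - m < i),
        zero_mul, mul_zero]
    rcases lt_or_ge k m with hkm | hmk
    · rw [Nat.choose_eq_zero_of_lt hkm, Nat.choose_eq_zero_of_lt (by omega : k - i < m),
        zero_mul, mul_zero]
    rw [Nat.choose_eq_zero_of_lt (by omega : k - i < m),
      Nat.choose_eq_zero_of_lt (by omega : k - m < i), mul_zero, mul_zero]

theorem neg_one_pow_sub {R : Type*} [Monoid R] [HasDistribNeg R] {j K : ℕ} (h : j ≤ K) :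
    (-1 : R) ^ (K - j) = (-1) ^ K * (-1) ^ j := by
  obtain ⟨d, rfl⟩ := Nat.exists_eq_add_of_le h
  rw [Nat.add_sub_cancel_left, pow_add, ((Commute.neg_one_left _).pow_pow j d).eq, mul_assoc,
    ← pow_add, Even.neg_one_pow ⟨j, rfl⟩, mul_one]

theorem Int.alternating_sum_range_choose_mul_choose {m n K : ℕ} (hmn : m < n) (hnK : n ≤ K) :
    ∑ j ∈ Finset.range (K + 1), (-1 : ℤ) ^ j * n.choose j * j.choose m = 0 := by
  obtain ⟨N, hN⟩ : ∃ N, n - m = N + 1 := ⟨n - m - 1, by omega⟩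
  have hterm (x : ℕ) : (-1 : ℤ) ^ (m + x) * n.choose (m + x) * (m + x).choose m
      = (-1) ^ m * n.choose m * ((-1) ^ x * (N + 1).choose x) := by
    have := Nat.choose_mul (n := n) (Nat.le_add_right m x)
    rw [Nat.add_sub_cancel_left, hN] at this
    rw [pow_add, mul_assoc, ← Nat.cast_mul, this]
    push_cast
    ring
  rw [show K + 1 = m + (K - m + 1) by omega, sum_range_add, sum_congr rfl fun x _ => hterm x,
    ← mul_sum, Int.alternating_sum_range_choose_eq_choose,
    Nat.choose_eq_zero_of_lt (by omega : N < K - m),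
    sum_eq_zero fun j hj => by rw [Nat.choose_eq_zero_of_lt (mem_range.1 hj), Nat.cast_zero, mul_zero]]
  simp

theorem Int.alternating_sum_range_choose_sub_mul_choose_sub {m n K : ℕ} (hmn : m < n)
    (hnK : n ≤ K) :
    ∑ i ∈ Finset.range (K + 1), (-1 : ℤ) ^ i * (K - i).choose m * n.choose (K - i) = 0 := by
  rw [← sum_range_reflect]
  calc _ = (-1) ^ K * ∑ j ∈ Finset.range (K + 1), (-1 : ℤ) ^ j * n.choose j * j.choose m := by
        rw [mul_sum]
        refine sum_congr rfl fun j hj => ?_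
        have hjK : j ≤ K := Nat.lt_succ_iff.1 (mem_range.1 hj)
        rw [Nat.add_sub_cancel, Nat.sub_sub_self hjK, neg_one_pow_sub hjK]
        ring
    _ = 0 := by rw [Int.alternating_sum_range_choose_mul_choose hmn hnK, mul_zero]

theorem stmt_12_general (k ℓ₁ ℓ₂ : ℕ) (h : ℓ₁ + ℓ₂ < k) :
    ∑ i ∈ Finset.range (k + 1),
      (-1 : ℚ) ^ i * (Nat.choose (k - ℓ₁) i) * (Nat.choose (k - ℓ₂) (k - i))
        / (Nat.choose k i) = 0 := by
  have hℓ₁ : (k.choose ℓ₁ : ℚ) ≠ 0 := by exact_mod_cast (Nat.choose_pos (by omega)).ne'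
  have hterm : ∀ i ∈ range (k + 1),
      (-1 : ℚ) ^ i * (Nat.choose (k - ℓ₁) i) * (Nat.choose (k - ℓ₂) (k - i)) / (Nat.choose k i)
        = ((-1 : ℤ) ^ i * (k - i).choose ℓ₁ * (k - ℓ₂).choose (k - i) : ℤ) / k.choose ℓ₁ := by
    intro i hi
    have hki : (k.choose i : ℚ) ≠ 0 := by
      exact_mod_cast (Nat.choose_pos (Nat.lt_succ_iff.1 (mem_range.1 hi))).ne'
    have key : (k.choose i : ℚ) * (k - i).choose ℓ₁ = k.choose ℓ₁ * (k - ℓ₁).choose i := by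
      exact_mod_cast Nat.choose_mul_choose_sub_comm k i ℓ₁
    rw [div_eq_div_iff hki hℓ₁]
    push_cast
    linear_combination -(-1 : ℚ) ^ i * (k - ℓ₂).choose (k - i) * key
  rw [sum_congr rfl hterm, ← sum_div, ← Int.cast_sum,
    Int.alternating_sum_range_choose_sub_mul_choose_sub (by omega : ℓ₁ < k - ℓ₂) (Nat.sub_le k ℓ₂)]
  simp

/-- For `k ≥ 1` and `ℓ₁ + ℓ₂ < k`, the alternating sum
`Σ_{i=0}^{k} (−1)^i · C(k−ℓ₁,i) · C(k−ℓ₂,k−i) / C(k,i)` vanishes. -/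
theorem stmt_12 (k ℓ₁ ℓ₂ : ℕ) (hk : 1 ≤ k) (h : ℓ₁ + ℓ₂ < k) :
    ∑ i ∈ Finset.range (k + 1),
      (-1 : ℚ) ^ i * (Nat.choose (k - ℓ₁) i) * (Nat.choose (k - ℓ₂) (k - i))
        / (Nat.choose k i) = 0 :=
  stmt_12_general k ℓ₁ ℓ₂ h
end

section
/- Splitting claim: Let μ₂ be a partition of [n] with a distinguished block B, |B| ≥ 2, i ∈ B, and let μ₁ be obtained by replacing B with B∖{i} and {i}, distinguishing B∖{i}. Let L_{μ₂}⁺ = supersets of B, L_{μ₁}⁺ = supersets of B∖{i}, and L_{μ₂}^{∂i} = {S : B ⊄ S, B ⊆ S∪{i}}. Then for every φ = Σ_σ α_σ χ_σ ∈ X, ‖Υ^{∂i}_{μ₂} φ‖ ≤ ‖Υ⁺_{μ₁} φ‖. Equivalently, Σ_{τ₂∈ℤ_q^{μ₂}} |Σ_{σ∈S^{∂i}[μ₂,τ₂]} α_σ|² ≤ Σ_{τ₁∈ℤ_q^{μ₁}} |Σ_{σ∈S⁺[μ₁,τ₁]} α_σ|², where S[μ,τ] = {σ ∈ ℤ_q^n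 : Σ_{i∈B}σ(i) = τ(B) for all B ∈ μ} and the superscripts restrict to σ with supp(σ) in the corresponding knowledge family. -/
open scoped BigOperators Classical

/-!
Splitting off `i` refines the constraints: the `μ₁`-constraints for the extension of `τ₂` by
`0` on the new singleton block `{i}` say exactly that `σ` meets the `μ₂`-constraints for `τ₂`
and `σ i = 0`. On the other hand, as `i ∈ B`, `supp σ ∈ L^{∂i}_{μ₂}` says exactly that
`i ∉ supp σ` and `B ∖ {i} ⊆ supp σ`. Hence each summand on the left is the summand on the right
indexed by the extension of `τ₂`, and extension by `0` is injective.
-/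

open Finset

theorem Fintype.sum_comp_le_sum_of_injective {α β M : Type*} [Fintype α] [Fintype β]
    [AddCommMonoid M] [Preorder M] [AddLeftMono M] {f : β → M} (hf : ∀ b, 0 ≤ f b)
    {e : α → β} (he : Function.Injective e) :
    ∑ a, f (e a) ≤ ∑ b, f b :=
  (sum_map univ ⟨e, he⟩ f).symm.trans_le (sum_le_univ_sum_of_nonneg hf)

theorem Finset.not_subset_and_subset_insert_iff {α : Type*} [DecidableEq α]
    {B S : Finset α} {i : α} (hi : i ∈ B) :
    (¬ B ⊆ S ∧ B ⊆ insert i S) ↔ (i ∉ S ∧ B.erase i ⊆ S) := by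
  rw [← subset_insert_iff]
  constructor
  · rintro ⟨hBS, hBiS⟩
    refine ⟨fun hiS => hBS ?_, hBiS⟩
    rwa [insert_eq_of_mem hiS] at hBiS
  · rintro ⟨hiS, hBiS⟩
    exact ⟨fun h => hiS (h hi), hBiS⟩

theorem Option.elim'_zero_injective {κ M : Type*} [Zero M] :
    Function.Injective (fun τ : κ → M => Option.elim' 0 τ) :=
  fun _ _ h => funext fun b => congrFun h (some b)

section Partition

variable {ι κ M : Type*} [Fintype ι] [DecidableEq ι] [DecidableEq κ] [AddCommMonoid M]

/-- The partition with blocks the fibres of `P`, with `i` split off into the block `none`. -/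
def splitOff (P : ι → κ) (i : ι) (j : ι) : Option κ :=
  if j = i then none else some (P j)

def fiberSum (P : ι → κ) (σ : ι → M) (b : κ) : M :=
  ∑ j ∈ univ.filter (fun j => P j = b), σ j

variable {P : ι → κ} {i : ι} {σ : ι → M}

theorem fiberSum_splitOff_none : fiberSum (splitOff P i) σ none = σ i := by
  have : univ.filter (fun j => splitOff P i j = none) = {i} := by
    ext j; by_cases h : j = i <;> simp [splitOff, h]
  rw [fiberSum, this, sum_singleton]

theorem fiberSum_splitOff_some (hσi : σ i = 0) (b : κ) :
    fiberSum (splitOff P i) σ (some b) = fiberSum P σ b := by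
  have : univ.filter (fun j => splitOff P i j = some b) = (univ.filter fun j => P j = b).erase i := by
    ext j; by_cases h : j = i <;> simp [splitOff, h]
  rw [fiberSum, this, sum_erase _ hσi, fiberSum]

theorem forall_fiberSum_splitOff_iff {τ : κ → M} :
    (∀ o, fiberSum (splitOff P i) σ o = Option.elim' 0 τ o) ↔
      σ i = 0 ∧ ∀ b, fiberSum P σ b = τ b := by
  constructor
  · intro h
    have hσi : σ i = 0 := fiberSum_splitOff_none.symm.trans (h none)
    exact ⟨hσi, fun b => (fiberSum_splitOff_some hσi b).symm.trans (h (some b))⟩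
  · rintro ⟨hσi, h⟩ (_ | b)
    · exact fiberSum_splitOff_none.trans hσi
    · exact (fiberSum_splitOff_some hσi b).trans (h b)

theorem constraints_and_partialBoundary_iff_splitOff [DecidableEq M] {B : Finset ι} (hi : i ∈ B)
    {τ : κ → M} :
    ((∀ b, fiberSum P σ b = τ b) ∧ ¬ B ⊆ univ.filter (fun j => σ j ≠ 0) ∧
        B ⊆ insert i (univ.filter (fun j => σ j ≠ 0))) ↔
      ((∀ o, fiberSum (splitOff P i) σ o = Option.elim' 0 τ o) ∧
        B.erase i ⊆ univ.filter (fun j => σ j ≠ 0)) := by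
  rw [not_subset_and_subset_insert_iff hi, forall_fiberSum_splitOff_iff, mem_filter]
  simp only [mem_univ, true_and, not_not]
  tauto

end Partition

theorem stmt_14_general (n m q : ℕ) [NeZero q]
    (P : Fin n → Fin m)
    (B : Finset (Fin n))
    (i : Fin n) (hi : i ∈ B)
    (α : (Fin n → ZMod q) → ℂ) :
    ∑ τ₂ : Fin m → ZMod q,
      ‖∑ σ ∈ Finset.univ.filter (fun σ : Fin n → ZMod q =>
          (∀ b : Fin m, ∑ j ∈ Finset.univ.filter (fun j => P j = b), σ j = τ₂ b) ∧
          ¬ B ⊆ Finset.univ.filter (fun j => σ j ≠ 0) ∧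
          B ⊆ insert i (Finset.univ.filter (fun j => σ j ≠ 0))),
        α σ‖ ^ 2
    ≤ ∑ τ₁ : Option (Fin m) → ZMod q,
      ‖∑ σ ∈ Finset.univ.filter (fun σ : Fin n → ZMod q =>
          (∀ b : Option (Fin m),
            ∑ j ∈ Finset.univ.filter
              (fun j => (if j = i then none else some (P j)) = b), σ j = τ₁ b) ∧
          B.erase i ⊆ Finset.univ.filter (fun j => σ j ≠ 0)),
        α σ‖ ^ 2 := by
  refine le_trans (le_of_eq (sum_congr rfl fun τ₂ _ => ?_))
    (Fintype.sum_comp_le_sum_of_injective (fun _ => by positivity) Option.elim'_zero_injective)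
  congr 3
  exact filter_congr fun σ _ => constraints_and_partialBoundary_iff_splitOff hi

/-- Splitting claim: let `μ₂` be a partition of `[n]` (blocks = fibers of
`P : Fin n → Fin m`) with highlighted block `B` (the fiber of `b0`), `|B| ≥ 2`,
`i ∈ B`, and let `μ₁` be obtained by splitting off `i` (blocks = fibers of
`j ↦ if j = i then none else some (P j)`), with highlighted block `B∖{i}`. Then
`Σ_{τ₂} |Σ_{σ∈S^{∂i}[μ₂,τ₂]} α_σ|² ≤ Σ_{τ₁} |Σ_{σ∈S⁺[μ₁,τ₁]} α_σ|²`,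
i.e. `‖Υ^{∂i}_{μ₂}φ‖ ≤ ‖Υ⁺_{μ₁}φ‖`. -/
theorem stmt_14 (n m q : ℕ) [NeZero q]
    (P : Fin n → Fin m) (b0 : Fin m)
    (B : Finset (Fin n)) (hB : B = Finset.univ.filter (fun j => P j = b0))
    (i : Fin n) (hi : i ∈ B) (hcard : 2 ≤ B.card)
    (α : (Fin n → ZMod q) → ℂ) :
    ∑ τ₂ : Fin m → ZMod q,
      ‖∑ σ ∈ Finset.univ.filter (fun σ : Fin n → ZMod q =>
          (∀ b : Fin m, ∑ j ∈ Finset.univ.filter (fun j => P j = b), σ j = τ₂ b) ∧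
          ¬ B ⊆ Finset.univ.filter (fun j => σ j ≠ 0) ∧
          B ⊆ insert i (Finset.univ.filter (fun j => σ j ≠ 0))),
        α σ‖ ^ 2
    ≤ ∑ τ₁ : Option (Fin m) → ZMod q,
      ‖∑ σ ∈ Finset.univ.filter (fun σ : Fin n → ZMod q =>
          (∀ b : Option (Fin m),
            ∑ j ∈ Finset.univ.filter
              (fun j => (if j = i then none else some (P j)) = b), σ j = τ₁ b) ∧
          B.erase i ⊆ Finset.univ.filter (fun j => σ j ≠ 0)),
        α σ‖ ^ 2 :=
  stmt_14_general n m q P B i hi α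
end

section
/- Refined query gain bound: Let H, K be Hilbert spaces, O a unitary on K, Ξ an orthogonal projector on K commuting with O, and Υ⁺, Ψ^∂ : H → K linear maps with ΞΨ^∂ = Ψ^∂. Suppose ψ_t, ψ'_t, ψ_{t+1} ∈ H satisfy the identity Υ⁺ψ_{t+1} − OΥ⁺ψ'_t = OΨ^∂ψ'_t − Ψ^∂ψ_{t+1} and ‖Υ⁺ψ'_t‖ = ‖Υ⁺ψ_t‖. Then ‖Υ⁺ψ_{t+1}‖² − ‖Υ⁺ψ_t‖² ≤ 2‖ΞΥ⁺ψ'_t‖·(‖Ψ^∂ψ'_t‖ + ‖Ψ^∂ψ_{t+1}‖) + (‖Ψ^∂ψ'_t‖ + ‖Ψ^∂ψ_{t+1}‖)². -/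
/-- Refined query gain bound: with `O` a unitary on `K`, `Ξ` an orthogonal
projector on `K` commuting with `O`, `ΞΨ^∂ = Ψ^∂`, the query identity
`Υ⁺ψ_{t+1} − OΥ⁺ψ'_t = OΨ^∂ψ'_t − Ψ^∂ψ_{t+1}`, and `‖Υ⁺ψ'_t‖ = ‖Υ⁺ψ_t‖`,
we have `‖Υ⁺ψ_{t+1}‖² − ‖Υ⁺ψ_t‖² ≤
2‖ΞΥ⁺ψ'_t‖(‖Ψ^∂ψ'_t‖+‖Ψ^∂ψ_{t+1}‖) + (‖Ψ^∂ψ'_t‖+‖Ψ^∂ψ_{t+1}‖)²`. -/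
theorem stmt_18 {H K : Type*} [NormedAddCommGroup H] [InnerProductSpace ℂ H]
    [NormedAddCommGroup K] [InnerProductSpace ℂ K]
    (O : K ≃ₗᵢ[ℂ] K) (Ξ : K →ₗ[ℂ] K)
    (hΞproj : Ξ ∘ₗ Ξ = Ξ) (hΞsym : Ξ.IsSymmetric)
    (hcomm : ∀ x : K, Ξ (O x) = O (Ξ x))
    (Up Ps : H →ₗ[ℂ] K)
    (hΞPs : ∀ x : H, Ξ (Ps x) = Ps x)
    (ψt ψ't ψt1 : H)
    (hid : Up ψt1 - O (Up ψ't) = O (Ps ψ't) - Ps ψt1)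
    (hnorm : ‖Up ψ't‖ = ‖Up ψt‖) :
    ‖Up ψt1‖ ^ 2 - ‖Up ψt‖ ^ 2 ≤
      2 * ‖Ξ (Up ψ't)‖ * (‖Ps ψ't‖ + ‖Ps ψt1‖) + (‖Ps ψ't‖ + ‖Ps ψt1‖) ^ 2 := by
  have hidem : ∀ x : K, Ξ (Ξ x) = Ξ x := fun x =>
    congrFun (congrArg (fun f => f.toFun) hΞproj) x
  -- Pythagoras for the projection Ξ
  have pyth : ∀ x : K, ‖x‖ ^ 2 = ‖x - Ξ x‖ ^ 2 + ‖Ξ x‖ ^ 2 := by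
    intro x
    have horth : inner ℂ (x - Ξ x) (Ξ x) = (0 : ℂ) := by
      rw [inner_sub_left]
      have h1 : inner ℂ (Ξ x) (Ξ x) = inner ℂ x (Ξ (Ξ x)) := hΞsym x (Ξ x)
      rw [h1, hidem]
      ring
    have := norm_add_sq (𝕜 := ℂ) (x - Ξ x) (Ξ x)
    simp only [horth, map_zero] at this
    have hx : x - Ξ x + Ξ x = x := by abel
    rw [hx] at this
    linarith [this]
  set u := Up ψ't
  set a := Up ψt1
  set w := O (Ps ψ't) - Ps ψt1 with hw
  have ha : a = O u + w := by rw [← hid]; abel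
  have hΞw : Ξ w = w := by
    rw [hw, map_sub, hcomm, hΞPs, hΞPs]
  have hwle : ‖w‖ ≤ ‖Ps ψ't‖ + ‖Ps ψt1‖ := by
    calc ‖w‖ ≤ ‖O (Ps ψ't)‖ + ‖Ps ψt1‖ := norm_sub_le _ _
    _ = ‖Ps ψ't‖ + ‖Ps ψt1‖ := by rw [O.norm_map]
  have hΞa : Ξ a = Ξ (O u) + w := by rw [ha, map_add, hΞw]
  have hperp : a - Ξ a = O u - Ξ (O u) := by rw [hΞa, ha]; abel
  have hΞOu : ‖Ξ (O u)‖ = ‖Ξ u‖ := by rw [hcomm, O.norm_map]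
  have hOu : ‖O u‖ = ‖Up ψt‖ := by rw [O.norm_map]; exact hnorm
  have hΞale : ‖Ξ a‖ ≤ ‖Ξ u‖ + ‖w‖ := by
    rw [hΞa]; calc ‖Ξ (O u) + w‖ ≤ ‖Ξ (O u)‖ + ‖w‖ := norm_add_le _ _
    _ = ‖Ξ u‖ + ‖w‖ := by rw [hΞOu]
  have p1 := pyth a
  have p2 := pyth (O u)
  rw [hperp] at p1
  rw [hOu] at p2
  rw [← hΞOu] at hΞale
  nlinarith [norm_nonneg (Ξ a), norm_nonneg (Ξ (O u)), norm_nonneg w,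
    norm_nonneg (Ps ψ't), norm_nonneg (Ps ψt1)]
end
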